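/- Let H be a bipartite graph whose complement is not a circular-arc graph, let (α,β,γ) be a structural triple of H, and let g ∈ ℕ. Then there exists a path P of length at least g with H-lists L and endvertices c and y with L(c) = {α,β} and L(y) = {α,β,γ}, such that: (P1) for every a ∈ {α,β} and every b ∈ {α,β} there exists a list homomorphism φ : (P,L) → H with φ(c) = a and φ(y) = b; (P2) there exists a list homomorphism φ : (P,L) → H with φ(c) = α and φ(y) = γ; (P3) there is no list homomorphism φ : (P,L) → H with φ(c) = β and φ(y) = γ. -/

import Mathlib

/-!
The path is a short core path, lengthened by prepending copies of the path with lists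
`{α, β}, {α', β'}, {α, β}`: as `αα'`, `ββ'` induce a matching, such a copy realizes exactly the
identity on `{α, β}`, so it changes neither (P1)–(P3) nor the lists at the ends.

If `α, β, γ` lie on an induced `C₆` or `C₈`, the core has length 2 or 4 and its lists are sets of
vertices of the cycle; whether a homomorphism exists is then a finite computation on the cycle.
Otherwise, walks `X : α → a`, `Y : α → b`, `Z : β → c` of equal length avoiding each other as in
(4) give lists `{Xᵢ, Yᵢ, Zᵢ}` on which a homomorphism starting at `β` is forced along `Z` and one
starting at `α` stays on `X ∪ Y`; these lists realize exactly `α ↦ a`, `α ↦ b`, `β ↦ c`. With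
`G₁` for `(a, b, c) = (α, β, γ)` and `G₂` for `(α, γ, β)`, the core `G₁ G₂⁻¹ G₁` realizes all
pairs in `{α, β}²` and `α ↦ β ↦ β ↦ γ`, but not `β ↦ γ`.
-/

open SimpleGraph

/-- A list homomorphism from `G` to the graph given by the symmetric relation `H`,
respecting the lists `L`. -/
def ListHomRel {U W : Type} (G : SimpleGraph U) (H : W → W → Prop)
    (L : U → Set W) (φ : U → W) : Prop :=
  (∀ v, φ v ∈ L v) ∧ ∀ ⦃u v : U⦄, G.Adj u v → H (φ u) (φ v)


/-- `X` is a bipartition class of `H`. -/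
def BipClass {W : Type} (H : SimpleGraph W) (X : Set W) : Prop :=
  ∀ ⦃u v : W⦄, H.Adj u v → (u ∈ X ↔ v ∉ X)

/-- Two vertices are incomparable: neither neighbourhood contains the other. -/
def IncompPair {W : Type} (H : SimpleGraph W) (u v : W) : Prop :=
  ¬ H.neighborSet u ⊆ H.neighborSet v ∧ ¬ H.neighborSet v ⊆ H.neighborSet u

/-- A set is incomparable if its vertices are pairwise incomparable. -/
def IncompSet {W : Type} (H : SimpleGraph W) (S : Set W) : Prop :=
  ∀ u ∈ S, ∀ v ∈ S, u ≠ v → IncompPair H u v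

/-- A set is strongly incomparable if every vertex has a private neighbor. -/
def StrongIncompSet {W : Type} (H : SimpleGraph W) (S : Set W) : Prop :=
  ∀ u ∈ S, ∃ u', H.Adj u u' ∧ ∀ w ∈ S, w ≠ u → ¬ H.Adj w u'

/-- Walk `P` avoids walk `Q` (for walks of equal length starting in one bipartition
class): their starting vertices differ and `p_i q_{i+1}` is never an edge. -/
def Avoids {W : Type} (H : SimpleGraph W) {a b c d : W}
    (P : H.Walk a b) (Q : H.Walk c d) : Prop :=
  a ≠ c ∧ ∀ i, i < P.length → ¬ H.Adj (P.getVert i) (Q.getVert (i + 1))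

/-- `w` lists the consecutive vertices of an induced cycle of length `m` in `H`. -/
def IsInducedCycleOn {W : Type} (H : SimpleGraph W) {m : ℕ} (w : Fin m → W) : Prop :=
  Function.Injective w ∧
    ∀ i j : Fin m, H.Adj (w i) (w j) ↔ ((j : ℕ) = ((i : ℕ) + 1) % m ∨ (i : ℕ) = ((j : ℕ) + 1) % m)

/-- A structural triple `(α,β,γ)` of a bipartite graph `H`: (1) there are `α',β'` such that
the edges `αα'`, `ββ'` induce a matching; (2) `α,β,γ` are pairwise incomparable; (3) there
are walks `P,P' : α→β` and `Q,Q' : β→α` of matching lengths with `P` avoiding `Q` and `Q'`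
avoiding `P'`; (4) either an induced `C₆` or `C₈` through `α,β,γ` as prescribed exists, or
`{α,β,γ}` is strongly incomparable and suitable mutually avoiding walks exist for every
permutation of `(α,β,γ)`. -/
def StructTriple {W : Type} (H : SimpleGraph W) (α β γ : W) : Prop :=
  (∃ α' β' : W, H.Adj α α' ∧ H.Adj β β' ∧ α ≠ β ∧ α' ≠ β' ∧
     ¬ H.Adj α β ∧ ¬ H.Adj α' β' ∧ ¬ H.Adj α β' ∧ ¬ H.Adj β α') ∧
  (IncompPair H α β ∧ IncompPair H α γ ∧ IncompPair H β γ) ∧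
  (∃ (P : H.Walk α β) (P' : H.Walk α β) (Q : H.Walk β α) (Q' : H.Walk β α),
     P.length = Q.length ∧ P'.length = Q'.length ∧ Avoids H P Q ∧ Avoids H Q' P') ∧
  ((∃ w : Fin 6 → W, IsInducedCycleOn H w ∧ α = w 0 ∧ β = w 4 ∧ γ = w 2) ∨
   (∃ w : Fin 8 → W, IsInducedCycleOn H w ∧ α = w 0 ∧ β = w 4 ∧ γ = w 2) ∨
   (StrongIncompSet H {α, β, γ} ∧
     ∀ a b c : W, ({a, b, c} : Set W) = {α, β, γ} →
       ∃ (Xc : H.Walk α a) (Yc : H.Walk α b) (Zc : H.Walk β c),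
         Xc.length = Zc.length ∧ Yc.length = Zc.length ∧
         Avoids H Xc Zc ∧ Avoids H Yc Zc ∧ Avoids H Zc Xc ∧ Avoids H Zc Yc))

/-- An arc of the circle (modelled as `AddCircle 1`): the image of a closed interval. -/
def IsCircArc (A : Set (AddCircle (1 : ℝ))) : Prop :=
  ∃ s ℓ : ℝ, 0 ≤ ℓ ∧ A = (fun t : ℝ => ((s + t : ℝ) : AddCircle (1 : ℝ))) '' Set.Icc 0 ℓ

/-- A circular-arc graph: vertices can be assigned arcs of a circle so that two distinct
vertices are adjacent iff their arcs intersect. -/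
def IsCircularArcGraph {W : Type} (G : SimpleGraph W) : Prop :=
  ∃ a : W → Set (AddCircle (1 : ℝ)),
    (∀ v, IsCircArc (a v)) ∧ ∀ u v : W, u ≠ v → (G.Adj u v ↔ (a u ∩ a v).Nonempty)


theorem IncompPair.ne {W : Type} {H : SimpleGraph W} {u v : W} (h : IncompPair H u v) :
    u ≠ v := by
  rintro rfl
  exact h.1 subset_rfl

namespace PathGadget

section PathRel

variable {V W : Type*}

/-- Lists are indexed by `ℕ` so that they can be concatenated and reversed; only the indices
`i ≤ n` matter. -/
def PathRel (r : W → W → Prop) (L : ℕ → Set W) (n : ℕ) (a b : W) : Prop :=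
  ∃ φ : ℕ → W, (∀ i ≤ n, φ i ∈ L i) ∧ (∀ i < n, r (φ i) (φ (i + 1))) ∧ φ 0 = a ∧ φ n = b

variable {r : W → W → Prop} {L M : ℕ → Set W} {n m : ℕ} {a b c : W}

theorem PathRel.start_mem (h : PathRel r L n a b) : a ∈ L 0 := by
  obtain ⟨φ, hL, -, rfl, -⟩ := h
  exact hL 0 n.zero_le

theorem PathRel.last_mem (h : PathRel r L n a b) : b ∈ L n := by
  obtain ⟨φ, hL, -, -, rfl⟩ := h
  exact hL n le_rfl

theorem PathRel.mono_lists (h : PathRel r L n a b) (hLM : ∀ i ≤ n, L i ⊆ M i) :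
    PathRel r M n a b := by
  obtain ⟨φ, hL, hr, h0, hn⟩ := h
  exact ⟨φ, fun i hi => hLM i hi (hL i hi), hr, h0, hn⟩

theorem PathRel.congr_lists (h : PathRel r L n a b) (hLM : ∀ i < n, L i = M i)
    (hb : b ∈ M n) : PathRel r M n a b := by
  obtain ⟨φ, hL, hr, h0, rfl⟩ := h
  refine ⟨φ, fun i hi => ?_, hr, h0, rfl⟩
  rcases hi.lt_or_eq with hi | rfl
  · exact hLM i hi ▸ hL i hi.le
  · exact hb

theorem pathRel_zero : PathRel r L 0 a b ↔ a = b ∧ a ∈ L 0 := by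
  refine ⟨fun h => ?_, ?_⟩
  · obtain ⟨φ, hL, -, rfl, rfl⟩ := h
    exact ⟨rfl, hL 0 le_rfl⟩
  · rintro ⟨rfl, ha⟩
    exact ⟨fun _ => a, fun i hi => by rwa [Nat.le_zero.1 hi], fun i hi => absurd hi i.not_lt_zero,
      rfl, rfl⟩

theorem pathRel_succ :
    PathRel r L (n + 1) a c ↔ ∃ b, PathRel r L n a b ∧ r b c ∧ c ∈ L (n + 1) := by
  refine ⟨fun ⟨φ, hL, hr, h0, hn⟩ => ?_, fun ⟨b, ⟨φ, hL, hr, h0, hn⟩, hbc, hc⟩ => ?_⟩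
  · exact ⟨φ n, ⟨φ, fun i hi => hL i (by omega), fun i hi => hr i (by omega), h0, rfl⟩,
      hn ▸ hr n n.lt_succ_self, hn ▸ hL (n + 1) le_rfl⟩
  · refine ⟨fun i => if i ≤ n then φ i else c, fun i hi => ?_, fun i hi => ?_, by simpa, by simp⟩
    · dsimp only
      split_ifs with h
      · exact hL i h
      · rwa [show i = n + 1 by omega]
    · rcases Nat.lt_succ_iff_lt_or_eq.1 hi with hi | rfl
      · simpa [hi.le, Nat.succ_le_of_lt hi] using hr i hi
      · simpa [hn] using hbc

theorem PathRel.mem_of_forward_closed {T : ℕ → Set W} (h : PathRel r L n a b) (ha : a ∈ T 0)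
    (hT : ∀ i < n, ∀ u ∈ T i, ∀ v ∈ L (i + 1), r u v → v ∈ T (i + 1)) : b ∈ T n := by
  induction n generalizing b with
  | zero => exact (pathRel_zero.1 h).1 ▸ ha
  | succ n ih =>
    obtain ⟨b', h', hr, hb⟩ := pathRel_succ.1 h
    exact hT n n.lt_succ_self b' (ih h' fun i hi => hT i (by omega)) b hb hr

def appendLists (L : ℕ → Set W) (n : ℕ) (M : ℕ → Set W) : ℕ → Set W :=
  fun i => if i < n then L i else M (i - n)

theorem appendLists_zero (hn : 0 < n) : appendLists L n M 0 = L 0 := if_pos hn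

theorem appendLists_self : appendLists L n M n = M 0 := by
  simp [appendLists]

theorem appendLists_add : appendLists L n M (n + m) = M m := by
  simp [appendLists]

theorem pathRel_appendLists (hML : M 0 ⊆ L n) :
    PathRel r (appendLists L n M) (n + m) a c ↔ ∃ b, PathRel r L n a b ∧ PathRel r M m b c := by
  induction m generalizing c with
  | zero =>
    have hLM : ∀ i < n, appendLists L n M i = L i := fun i hi => if_pos hi
    simp only [pathRel_zero, Nat.add_zero]
    refine ⟨fun h => ⟨c, ?_, rfl, ?_⟩, fun ⟨b, h, hbc, hb⟩ => ?_⟩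
    · exact h.congr_lists hLM (hML (by simpa only [appendLists_self] using h.last_mem))
    · simpa only [appendLists_self] using h.last_mem
    · subst hbc
      exact h.congr_lists (fun i hi => (hLM i hi).symm) (appendLists_self ▸ hb)
  | succ m ih =>
    rw [← Nat.add_assoc, pathRel_succ, Nat.add_assoc, appendLists_add]
    simp only [ih, pathRel_succ]
    constructor
    · rintro ⟨b', ⟨b, hab, hbb'⟩, hr, hc⟩
      exact ⟨b, hab, b', hbb', hr, hc⟩
    · rintro ⟨b, hab, b', hbb', hr, hc⟩
      exact ⟨b', ⟨b, hab, hbb'⟩, hr, hc⟩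

def reverseLists (L : ℕ → Set W) (n : ℕ) : ℕ → Set W :=
  fun i => L (n - i)

theorem PathRel.reverse (h : PathRel r L n a b) :
    PathRel (flip r) (reverseLists L n) n b a := by
  obtain ⟨φ, hL, hr, rfl, rfl⟩ := h
  refine ⟨fun i => φ (n - i), fun i hi => hL _ (by omega), fun i hi => ?_, by simp, by simp⟩
  have := hr (n - (i + 1)) (by omega)
  rwa [show n - (i + 1) + 1 = n - i by omega] at this

theorem pathRel_reverseLists_iff {H : SimpleGraph W} :
    PathRel H.Adj (reverseLists L n) n b a ↔ PathRel H.Adj L n a b := by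
  have hflip : flip H.Adj = H.Adj := @Std.Symm.flip_eq _ _ H.symm
  refine ⟨fun h => ?_, fun h => hflip ▸ h.reverse⟩
  refine hflip ▸ h.reverse.mono_lists fun i hi => ?_
  simp [reverseLists, Nat.sub_sub_self hi]

theorem pathRel_image_iff {r' : V → V → Prop} {w : V → W} (hw : Function.Injective w)
    (hr : ∀ i j, r (w i) (w j) ↔ r' i j) {S : ℕ → Set V} {a b : V} :
    PathRel r (fun i => w '' S i) n (w a) (w b) ↔ PathRel r' S n a b := by
  induction n generalizing b with
  | zero => simp [pathRel_zero, hw.eq_iff, hw.mem_set_image]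
  | succ n ih =>
    simp only [pathRel_succ]
    constructor
    · rintro ⟨x, hx, hxb, hb⟩
      obtain ⟨y, -, rfl⟩ := hx.last_mem
      exact ⟨y, ih.1 hx, (hr y b).1 hxb, hw.mem_set_image.1 hb⟩
    · rintro ⟨y, hy, hyb, hb⟩
      exact ⟨w y, ih.2 hy, (hr y b).2 hyb, Set.mem_image_of_mem w hb⟩

section Reach

variable [DecidableEq V] (r : V → V → Prop) [DecidableRel r] (S : ℕ → Finset V) (a : V)

def reach : ℕ → Finset V
  | 0 => (S 0).filter (· = a)
  | n + 1 => (S (n + 1)).filter fun v => ∃ u ∈ reach n, r u v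

theorem mem_reach_iff {n : ℕ} {b : V} :
    b ∈ reach r S a n ↔ PathRel r (fun i => S i) n a b := by
  induction n generalizing b with
  | zero =>
    rw [reach, Finset.mem_filter, pathRel_zero]
    exact ⟨fun ⟨hb, hba⟩ => ⟨hba.symm, hba ▸ hb⟩, fun ⟨hab, ha⟩ => ⟨hab ▸ ha, hab.symm⟩⟩
  | succ n ih =>
    simp only [reach, Finset.mem_filter, pathRel_succ, ih]
    exact ⟨fun ⟨hb, u, hu, hub⟩ => ⟨u, hu, hub, hb⟩, fun ⟨u, hu, hub, hb⟩ => ⟨hb, u, hu, hub⟩⟩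

end Reach

end PathRel

/-- Lists on the path `0, …, n` with the properties (P1)–(P3), except that the first list need
only be contained in `{α, β}`. -/
structure IsGadget {W : Type*} (r : W → W → Prop) (α β γ : W) (L : ℕ → Set W) (n : ℕ) :
    Prop where
  start_subset : L 0 ⊆ {α, β}
  last_eq : L n = {α, β, γ}
  rel_pair : ∀ a ∈ ({α, β} : Set W), ∀ b ∈ ({α, β} : Set W), PathRel r L n a b
  rel_α_γ : PathRel r L n α γ
  not_rel_β_γ : ¬ PathRel r L n β γ

section Gadget

variable {V W : Type*} {α β γ : W} {n : ℕ}

theorem IsGadget.of_reach [DecidableEq V] {r' : V → V → Prop} [DecidableRel r']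
    {S : ℕ → Finset V} {a b c : V}
    (h : S 0 ⊆ {a, b} ∧ S n = {a, b, c} ∧
      (∀ x ∈ ({a, b} : Finset V), ∀ y ∈ ({a, b} : Finset V), y ∈ reach r' S x n) ∧
      c ∈ reach r' S a n ∧ c ∉ reach r' S b n) :
    IsGadget r' a b c (fun i => S i) n := by
  obtain ⟨h0, hn, hpair, hac, hbc⟩ := h
  refine ⟨by rw [← Finset.coe_pair]; exact Finset.coe_subset.2 h0, by simp [hn],
    fun x hx y hy => ?_, (mem_reach_iff _ _ _).1 hac, fun h => hbc ((mem_reach_iff _ _ _).2 h)⟩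
  exact (mem_reach_iff _ _ _).1 (hpair x (by simpa using hx) y (by simpa using hy))

theorem IsGadget.image {r : W → W → Prop} {r' : V → V → Prop} {w : V → W}
    (hw : Function.Injective w) (hr : ∀ i j, r (w i) (w j) ↔ r' i j) {S : ℕ → Set V}
    {a b c : V} (h : IsGadget r' a b c S n) :
    IsGadget r (w a) (w b) (w c) (fun i => w '' S i) n := by
  refine ⟨?_, by simp [h.last_eq, Set.image_insert_eq], ?_, (pathRel_image_iff hw hr).2 h.rel_α_γ,
    fun h' => h.not_rel_β_γ ((pathRel_image_iff hw hr).1 h')⟩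
  · simpa [Set.image_pair] using Set.image_mono (f := w) h.start_subset
  · simp only [Set.mem_insert_iff, Set.mem_singleton_iff]
    rintro _ (rfl | rfl) _ (rfl | rfl) <;>
      exact (pathRel_image_iff hw hr).2 (h.rel_pair _ (by simp) _ (by simp))

variable {H : SimpleGraph W} {α' β' : W}

def padLists (α β α' β' : W) : ℕ → Set W :=
  fun i => if Even i then {α, β} else {α', β'}

theorem exists_adj_adj_iff (hα : H.Adj α α') (hβ : H.Adj β β') (hαβ' : ¬ H.Adj α β')
    (hβα' : ¬ H.Adj β α') {a b : W} (ha : a ∈ ({α, β} : Set W)) (hb : b ∈ ({α, β} : Set W)) :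
    (∃ c ∈ ({α', β'} : Set W), H.Adj a c ∧ H.Adj c b) ↔ b = a := by
  simp only [Set.mem_insert_iff, Set.mem_singleton_iff] at ha hb
  constructor
  · rintro ⟨c, hc | hc, hac, hcb⟩ <;> subst hc <;> rcases ha with rfl | rfl <;>
      rcases hb with rfl | rfl <;> first | rfl | contradiction | exact absurd hcb.symm ‹_›
  · rintro rfl
    rcases ha with rfl | rfl
    exacts [⟨α', by simp, hα, hα.symm⟩, ⟨β', by simp, hβ, hβ.symm⟩]

theorem pathRel_padLists (hα : H.Adj α α') (hβ : H.Adj β β') (hαβ' : ¬ H.Adj α β')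
    (hβα' : ¬ H.Adj β α') (k : ℕ) {a b : W} :
    PathRel H.Adj (padLists α β α' β') (2 * k) a b ↔ a ∈ ({α, β} : Set W) ∧ b = a := by
  induction k generalizing b with
  | zero =>
    rw [Nat.mul_zero, pathRel_zero, padLists, if_pos Even.zero]
    exact and_comm.trans (and_congr_right fun _ => eq_comm)
  | succ k ih =>
    have hodd : ¬ Even (2 * k + 1) := by simp
    have heven : Even (2 * k + 1 + 1) := by simp [parity_simps]
    rw [show 2 * (k + 1) = 2 * k + 1 + 1 by ring, pathRel_succ]
    simp only [pathRel_succ, ih, padLists, if_neg hodd, if_pos heven]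
    constructor
    · rintro ⟨c, ⟨_, ⟨ha, rfl⟩, hac, hc⟩, hcb, hb⟩
      exact ⟨ha, (exists_adj_adj_iff hα hβ hαβ' hβα' ha hb).1 ⟨c, hc, hac, hcb⟩⟩
    · rintro ⟨ha, rfl⟩
      obtain ⟨c, hc, hac, hcb⟩ := (exists_adj_adj_iff hα hβ hαβ' hβα' ha ha).2 rfl
      exact ⟨c, ⟨b, ⟨ha, rfl⟩, hac, hc⟩, hcb, ha⟩

theorem IsGadget.appendLists_padLists {C : ℕ → Set W} (hC : IsGadget H.Adj α β γ C n)
    (hα : H.Adj α α') (hβ : H.Adj β β') (hαβ' : ¬ H.Adj α β') (hβα' : ¬ H.Adj β α') (k : ℕ) :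
    IsGadget H.Adj α β γ (appendLists (padLists α β α' β') (2 * k) C) (2 * k + n) := by
  have hjoin : C 0 ⊆ padLists α β α' β' (2 * k) := by
    simpa [padLists] using hC.start_subset
  have hrel : ∀ a b, PathRel H.Adj (appendLists (padLists α β α' β') (2 * k) C) (2 * k + n) a b ↔
      a ∈ ({α, β} : Set W) ∧ PathRel H.Adj C n a b := by
    intro a b
    rw [pathRel_appendLists hjoin]
    simp only [pathRel_padLists hα hβ hαβ' hβα']
    exact ⟨fun ⟨_, ⟨ha, rfl⟩, h⟩ => ⟨ha, h⟩, fun ⟨ha, h⟩ => ⟨a, ⟨ha, rfl⟩, h⟩⟩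
  refine ⟨?_, by rw [appendLists_add, hC.last_eq],
    fun a ha b hb => (hrel a b).2 ⟨ha, hC.rel_pair a ha b hb⟩, (hrel α γ).2 ⟨by simp, hC.rel_α_γ⟩,
    fun h => hC.not_rel_β_γ ((hrel β γ).1 h).2⟩
  unfold appendLists
  split_ifs
  · simp [padLists]
  · simpa using hC.start_subset

theorem isGadget_sandwich {L M : ℕ → Set W} {m : ℕ} (hαβ : α ≠ β) (hαγ : α ≠ γ) (hβγ : β ≠ γ)
    (hL₀ : L 0 = {α, β}) (hLn : L n = {α, β, γ})
    (hL : ∀ s t, PathRel H.Adj L n s t ↔ s = α ∧ (t = α ∨ t = β) ∨ s = β ∧ t = γ)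
    (hM₀ : M 0 = {α, β}) (hMm : M m = {α, γ, β})
    (hM : ∀ s t, PathRel H.Adj M m s t ↔ s = α ∧ (t = α ∨ t = γ) ∨ s = β ∧ t = β) :
    IsGadget H.Adj α β γ (appendLists L n (appendLists (reverseLists M m) m L)) (n + (m + n)) := by
  have hn : 0 < n := by
    refine Nat.pos_of_ne_zero fun hn => hβγ ?_
    subst hn
    exact (pathRel_zero.1 ((hL β γ).2 (by simp))).1
  have hm : 0 < m := by
    refine Nat.pos_of_ne_zero fun hm => hαγ ?_
    subst hm
    exact (pathRel_zero.1 ((hM α γ).2 (by simp))).1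
  have hjoin₁ : L 0 ⊆ reverseLists M m m := by simp [reverseLists, hL₀, hM₀]
  have hjoin₂ : appendLists (reverseLists M m) m L 0 ⊆ L n := by
    rw [appendLists_zero hm, reverseLists, Nat.sub_zero, hMm, hLn, Set.pair_comm γ β]
  have hrel : ∀ s t, PathRel H.Adj (appendLists L n (appendLists (reverseLists M m) m L))
      (n + (m + n)) s t ↔
        ∃ u, PathRel H.Adj L n s u ∧ ∃ v, PathRel H.Adj M m v u ∧ PathRel H.Adj L n v t := by
    intro s t
    simp only [pathRel_appendLists hjoin₂, pathRel_appendLists hjoin₁, pathRel_reverseLists_iff]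
  simp only [hL, hM] at hrel
  refine ⟨by rw [appendLists_zero hn, hL₀], by rw [appendLists_add, appendLists_add, hLn], ?_,
    (hrel _ _).2 ⟨β, by simp, β, by simp, by simp⟩, ?_⟩
  · simp only [Set.mem_insert_iff, Set.mem_singleton_iff, forall_eq_or_imp, forall_eq]
    refine ⟨⟨?_, ?_⟩, ?_, ?_⟩
    · exact (hrel _ _).2 ⟨α, by simp, α, by simp, by simp⟩
    · exact (hrel _ _).2 ⟨α, by simp, α, by simp, by simp⟩
    · exact (hrel _ _).2 ⟨γ, by simp, α, by simp, by simp⟩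
    · exact (hrel _ _).2 ⟨γ, by simp, α, by simp, by simp⟩
  -- `L` sends `β` only to `γ`, `M` reaches `γ` only from `α`, and `L` never sends `α` to `γ`.
  rw [hrel]
  rintro ⟨u, hu, v, hvu, hv⟩
  grind

end Gadget

section Walks

variable {W : Type} {H : SimpleGraph W}

theorem pathRel_of_walk {L : ℕ → Set W} {u v : W} (p : H.Walk u v)
    (h : ∀ i ≤ p.length, p.getVert i ∈ L i) : PathRel H.Adj L p.length u v :=
  ⟨p.getVert, h, fun _ hi => p.adj_getVert_succ hi, p.getVert_zero, p.getVert_length⟩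

def walkLists {x₀ x₁ y₀ y₁ z₀ z₁ : W} (X : H.Walk x₀ x₁) (Y : H.Walk y₀ y₁)
    (Z : H.Walk z₀ z₁) : ℕ → Set W :=
  fun i => {X.getVert i, Y.getVert i, Z.getVert i}

variable {x₀ x₁ y₁ z₀ z₁ : W} {X : H.Walk x₀ x₁} {Y : H.Walk x₀ y₁} {Z : H.Walk z₀ z₁}

theorem pathRel_walkLists_iff (hX : X.length = Z.length) (hY : Y.length = Z.length)
    (hXZ : Avoids H X Z) (hYZ : Avoids H Y Z) (hZX : Avoids H Z X) (hZY : Avoids H Z Y)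
    {s t : W} :
    PathRel H.Adj (walkLists X Y Z) Z.length s t ↔
      s = x₀ ∧ (t = x₁ ∨ t = y₁) ∨ s = z₀ ∧ t = z₁ := by
  constructor
  · intro h
    have hs : s = x₀ ∨ s = z₀ := by simpa [walkLists] using h.start_mem
    rcases hs with rfl | rfl
    · refine Or.inl ⟨rfl, ?_⟩
      have := h.mem_of_forward_closed (T := fun i => {X.getVert i, Y.getVert i}) (by simp) ?_
      · rwa [← hX, X.getVert_length, hX, ← hY, Y.getVert_length] at this
      rintro i hi u hu v hv huv
      simp only [walkLists, Set.mem_insert_iff, Set.mem_singleton_iff] at hu hv ⊢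
      rcases hv with rfl | rfl | rfl
      · exact Or.inl rfl
      · exact Or.inr rfl
      · rcases hu with rfl | rfl
        · exact absurd huv (hXZ.2 i (hX ▸ hi))
        · exact absurd huv (hYZ.2 i (hY ▸ hi))
    · refine Or.inr ⟨rfl, ?_⟩
      have := h.mem_of_forward_closed (T := fun i => {Z.getVert i}) (by simp) ?_
      · simpa using this
      rintro i hi u hu v hv huv
      simp only [walkLists, Set.mem_insert_iff, Set.mem_singleton_iff] at hu hv ⊢
      subst hu
      rcases hv with rfl | rfl | rfl
      · exact absurd huv (hZX.2 i hi)
      · exact absurd huv (hZY.2 i hi)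
      · rfl
  · rintro (⟨rfl, rfl | rfl⟩ | ⟨rfl, rfl⟩)
    · exact hX ▸ pathRel_of_walk X fun i _ => by simp [walkLists]
    · exact hY ▸ pathRel_of_walk Y fun i _ => by simp [walkLists]
    · exact pathRel_of_walk Z fun i _ => by simp [walkLists]

theorem exists_lists_of_avoiding_walks
    (h : ∃ (X : H.Walk x₀ x₁) (Y : H.Walk x₀ y₁) (Z : H.Walk z₀ z₁),
      X.length = Z.length ∧ Y.length = Z.length ∧
      Avoids H X Z ∧ Avoids H Y Z ∧ Avoids H Z X ∧ Avoids H Z Y) :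
    ∃ (L : ℕ → Set W) (n : ℕ), L 0 = {x₀, z₀} ∧ L n = {x₁, y₁, z₁} ∧
      ∀ s t, PathRel H.Adj L n s t ↔ s = x₀ ∧ (t = x₁ ∨ t = y₁) ∨ s = z₀ ∧ t = z₁ := by
  obtain ⟨X, Y, Z, hX, hY, hXZ, hYZ, hZX, hZY⟩ := h
  refine ⟨walkLists X Y Z, Z.length, by simp [walkLists], ?_,
    fun s t => pathRel_walkLists_iff hX hY hXZ hYZ hZX hZY⟩
  rw [walkLists, Z.getVert_length, ← hX, X.getVert_length, hX, ← hY, Y.getVert_length]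

end Walks

theorem exists_listHomRel_pathGraph_iff {W : Type} {H : SimpleGraph W} {L : ℕ → Set W} {n : ℕ}
    {a b : W} :
    (∃ φ, ListHomRel (pathGraph (n + 1)) H.Adj (fun i : Fin (n + 1) => L i) φ ∧
      φ 0 = a ∧ φ (Fin.last n) = b) ↔ PathRel H.Adj L n a b := by
  constructor
  · rintro ⟨φ, ⟨hL, hadj⟩, rfl, rfl⟩
    refine ⟨fun i => φ (Fin.clamp i n), fun i hi => ?_, fun i hi => hadj ?_, ?_, ?_⟩
    · simpa [Fin.clamp, hi] using hL (Fin.clamp i n)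
    · rw [pathGraph_adj]
      simp [Fin.clamp]
      omega
    · exact congrArg φ (Fin.ext (by simp [Fin.clamp]))
    · exact congrArg φ (Fin.ext (by simp [Fin.clamp]))
  · rintro ⟨φ, hL, hadj, rfl, rfl⟩
    refine ⟨fun i => φ i, ⟨fun i => hL i (Nat.lt_succ_iff.1 i.2), fun u v huv => ?_⟩, rfl, rfl⟩
    rcases pathGraph_adj.1 huv with h | h
    · simpa [← h] using hadj u (by omega)
    · simpa [← h] using (hadj v (by omega)).symm

end PathGadget

open PathGadget

theorem StructTriple.exists_isGadget {W : Type} {H : SimpleGraph W} {α β γ : W}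
    (h : StructTriple H α β γ) : ∃ L n, IsGadget H.Adj α β γ L n := by
  obtain ⟨-, ⟨hαβ, hαγ, hβγ⟩, -, ⟨w, hw, rfl, rfl, rfl⟩ | ⟨w, hw, rfl, rfl, rfl⟩ | ⟨-, hwalks⟩⟩ := h
  · exact ⟨_, 2, (IsGadget.of_reach (S := fun i => [{0, 4}, {1, 5}, {0, 2, 4}].getD i ∅)
      (by decide)).image hw.1 hw.2⟩
  · exact ⟨_, 4, (IsGadget.of_reach
      (S := fun i => [{0, 4}, {1, 5}, {0, 2, 6}, {3, 5, 7}, {0, 2, 4}].getD i ∅)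
      (by decide)).image hw.1 hw.2⟩
  · obtain ⟨L, n, hL₀, hLn, hL⟩ := exists_lists_of_avoiding_walks (hwalks α β γ rfl)
    obtain ⟨M, m, hM₀, hMm, hM⟩ :=
      exists_lists_of_avoiding_walks (hwalks α γ β (by rw [Set.pair_comm]))
    exact ⟨_, _, isGadget_sandwich hαβ.ne hαγ.ne hβγ.ne hL₀ hLn hL hM₀ hMm hM⟩

theorem path_gadget_general {W : Type} (H : SimpleGraph W)
    (α β γ : W)
    (htriple : StructTriple H α β γ) (g : ℕ) :
    ∃ (n : ℕ) (L : Fin (n + 1) → Set W),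
      g ≤ n ∧
      L 0 = {α, β} ∧ L (Fin.last n) = {α, β, γ} ∧
      (∀ a ∈ ({α, β} : Set W), ∀ b ∈ ({α, β} : Set W),
        ∃ φ, ListHomRel (SimpleGraph.pathGraph (n + 1)) H.Adj L φ ∧
          φ 0 = a ∧ φ (Fin.last n) = b) ∧
      (∃ φ, ListHomRel (SimpleGraph.pathGraph (n + 1)) H.Adj L φ ∧
        φ 0 = α ∧ φ (Fin.last n) = γ) ∧
      ¬ ∃ φ, ListHomRel (SimpleGraph.pathGraph (n + 1)) H.Adj L φ ∧
        φ 0 = β ∧ φ (Fin.last n) = γ := by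
  obtain ⟨C, n, hC⟩ := htriple.exists_isGadget
  obtain ⟨⟨α', β', hα, hβ, -, -, -, -, hαβ', hβα'⟩, -⟩ := htriple
  have hP := hC.appendLists_padLists hα hβ hαβ' hβα' (g + 1)
  refine ⟨2 * (g + 1) + n, fun i => appendLists (padLists α β α' β') (2 * (g + 1)) C i, by omega,
    ?_, by simpa using hP.last_eq, ?_, ?_, ?_⟩ <;> simp only [exists_listHomRel_pathGraph_iff]
  · simp [appendLists_zero, padLists]
  · exact hP.rel_pair
  · exact hP.rel_α_γ
  · exact hP.not_rel_β_γ

/-- Let `H` be a bipartite graph (class `X`) whose complement is not a circular-arc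
graph, `(α,β,γ)` a structural triple of `H` with `α,β,γ ∈ X`, and `g ∈ ℕ`.  Then there
is a path `P` of length `n ≥ g` (here `pathGraph (n+1)`, with endvertices `c = 0` and
`y = Fin.last n`) with `H`-lists `L` such that `L c = {α,β}`, `L y = {α,β,γ}`, and:
(P1) for all `a, b ∈ {α,β}` some list homomorphism maps `c` to `a` and `y` to `b`;
(P2) some list homomorphism maps `c` to `α` and `y` to `γ`;
(P3) no list homomorphism maps `c` to `β` and `y` to `γ`. -/
theorem path_gadget {W : Type} [Fintype W] (H : SimpleGraph W) (X : Set W)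
    (hbip : BipClass H X) (hnca : ¬ IsCircularArcGraph Hᶜ)
    (α β γ : W) (hα : α ∈ X) (hβ : β ∈ X) (hγ : γ ∈ X)
    (htriple : StructTriple H α β γ) (g : ℕ) :
    ∃ (n : ℕ) (L : Fin (n + 1) → Set W),
      g ≤ n ∧
      L 0 = {α, β} ∧ L (Fin.last n) = {α, β, γ} ∧
      (∀ a ∈ ({α, β} : Set W), ∀ b ∈ ({α, β} : Set W),
        ∃ φ, ListHomRel (SimpleGraph.pathGraph (n + 1)) H.Adj L φ ∧
          φ 0 = a ∧ φ (Fin.last n) = b) ∧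
      (∃ φ, ListHomRel (SimpleGraph.pathGraph (n + 1)) H.Adj L φ ∧
        φ 0 = α ∧ φ (Fin.last n) = γ) ∧
      ¬ ∃ φ, ListHomRel (SimpleGraph.pathGraph (n + 1)) H.Adj L φ ∧
        φ 0 = β ∧ φ (Fin.last n) = γ :=
  path_gadget_general H α β γ htriple g
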